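/- arXiv:2602.18804 — 3 statements merged into one kernel-verified Lean document; each statement's English description precedes it below -/
import Mathlib

section
/- Let R be a commutative ring, I and J ideals of R, and M an R-module. The following are equivalent: (1) M is (I,J)-prime, i.e. for every m ∈ M, (I*J)•m = 0 implies I•m = 0 or J•m = 0; (2) (0 :_M I*J) = (0 :_M I) or (0 :_M I*J) = (0 :_M J). -/
/-! Being `(I,J)`-prime says that `(0 :_M IJ)` is covered by `(0 :_M I) ∪ (0 :_M J)`. A group
covered by two subgroups equals one of them, and both annihilators lie inside `(0 :_M IJ)`. -/

/-- An `R`-module `M` is `(I,J)`-prime if for all `m ∈ M`, `(I*J) • m = 0` implies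
that either `I • m = 0` or `J • m = 0`. -/
def IsIJPrime {R : Type*} [CommRing R] (I J : Ideal R) (M : Type*) [AddCommGroup M]
    [Module R M] : Prop :=
  ∀ m : M, (∀ a ∈ I * J, a • m = 0) → (∀ a ∈ I, a • m = 0) ∨ (∀ a ∈ J, a • m = 0)

namespace Submodule

variable {R M : Type*}

theorem mem_torsionBySet_iff_forall_mem [CommSemiring R] [AddCommMonoid M] [Module R M]
    {s : Set R} (x : M) : x ∈ torsionBySet R M s ↔ ∀ a ∈ s, a • x = 0 := by
  simp only [mem_torsionBySet_iff, Subtype.forall]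

theorem coe_subset_union_iff_eq_or_eq [Ring R] [AddCommGroup M] [Module R M]
    {N A B : Submodule R M} (hA : A ≤ N) (hB : B ≤ N) :
    (N : Set M) ⊆ A ∪ B ↔ N = A ∨ N = B := by
  rw [AddSubgroupClass.subset_union]
  exact or_congr ⟨fun h ↦ le_antisymm h hA, Eq.le⟩ ⟨fun h ↦ le_antisymm h hB, Eq.le⟩

theorem isIJPrime_iff_coe_torsionBySet_subset_union [CommRing R] [AddCommGroup M] [Module R M]
    (I J : Ideal R) :
    IsIJPrime I J M ↔
      (torsionBySet R M (I * J) : Set M) ⊆ torsionBySet R M I ∪ torsionBySet R M J := by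
  simp only [IsIJPrime, Set.subset_def, Set.mem_union, SetLike.mem_coe,
    mem_torsionBySet_iff_forall_mem]

end Submodule

theorem stmt_5 {R : Type*} [CommRing R] (I J : Ideal R) (M : Type*) [AddCommGroup M]
    [Module R M] :
    IsIJPrime I J M ↔
      (Submodule.torsionBySet R M (I * J) = Submodule.torsionBySet R M I ∨
       Submodule.torsionBySet R M (I * J) = Submodule.torsionBySet R M J) := by
  rw [Submodule.isIJPrime_iff_coe_torsionBySet_subset_union]
  exact Submodule.coe_subset_union_iff_eq_or_eq
    (Submodule.torsionBySet_le_torsionBySet_of_subset Ideal.mul_le_left)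
    (Submodule.torsionBySet_le_torsionBySet_of_subset Ideal.mul_le_right)
end

section
/- Let R be a commutative ring, I and J ideals of R, and M an R-module. If M is I-prime, then M is (I,J)-prime. -/
/-- An `R`-module `M` is `I`-prime if for all `m ∈ M`, `I • m = 0` implies that
either `m = 0` or `I • M = 0`. -/
def IsIPrime {R : Type*} [CommRing R] (I : Ideal R) (M : Type*) [AddCommGroup M]
    [Module R M] : Prop :=
  ∀ m : M, (∀ a ∈ I, a • m = 0) → m = 0 ∨ (∀ a ∈ I, ∀ x : M, a • x = 0)

theorem stmt_6 {R : Type*} [CommRing R] (I J : Ideal R) (M : Type*) [AddCommGroup M]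
    [Module R M] (h : IsIPrime I M) : IsIJPrime I J M := by
  intro m hm
  by_cases hall : ∀ b ∈ J, b • m = 0
  · exact Or.inr hall
  · push_neg at hall
    obtain ⟨b, hb, hbm⟩ := hall
    left
    have := h (b • m) (fun a ha => by
      rw [← mul_smul]
      exact hm _ (Ideal.mul_mem_mul ha hb))
    rcases this with h0 | hann
    · exact absurd h0 hbm
    · intro a ha
      exact hann a ha m
end

section
/- Let R be a commutative ring, I an ideal of R, and M an R-module. If M is I-prime, then M is I-reduced, i.e. for every m ∈ M, I²•m = 0 implies I•m = 0. -/
/-- An `R`-module `M` is `I`-reduced if for all `m ∈ M`, `I² • m = 0` implies `I • m = 0`. -/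
def IsIReduced {R : Type*} [CommRing R] (I : Ideal R) (M : Type*) [AddCommGroup M]
    [Module R M] : Prop :=
  ∀ m : M, (∀ a ∈ I ^ 2, a • m = 0) → ∀ a ∈ I, a • m = 0

theorem stmt_7 {R : Type*} [CommRing R] (I : Ideal R) (M : Type*) [AddCommGroup M]
    [Module R M] (h : IsIPrime I M) : IsIReduced I M := by
  intro m h2 a ha
  rcases h (a • m) (fun b hb => by
      rw [smul_smul]
      exact h2 _ (by simpa [sq] using Ideal.mul_mem_mul hb ha)) with h0 | hIM
  · exact h0
  · exact hIM a ha m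
end
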